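/- arXiv:1803.09009 — 2 statements merged into one kernel-verified Lean document; each statement's English description precedes it below -/
import Mathlib

section
/- For any two adjacent necklaces σ = a_1...a_n and τ = b_1...b_n in the colexicographic listing of binary necklaces of length n (with σ before τ), if j is the smallest index such that b_j ≠ 0 and j ≤ n, then the length-(n−j) suffixes of σ and τ are equal. -/
/-!
Write `τ = 0^(j-1) 1 w`. Turning the first `1` of `τ` into `0` gives `γ = 0^j w`, which is
again a necklace: `τ` ends in `1`, so every proper suffix of `γ` contains a `1`, and by
minimality of `τ` no such suffix starts with more than `j - 1` zeros, while `γ` starts with at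
least `j`. In colex order `γ < τ`, and if the suffix of `σ` after position `j` differed from `w`
it would be colex-below `w`, giving `σ < γ < τ`.
-/

/-- A binary necklace: lexicographically least among all its cyclic rotations. -/
def IsNecklace (w : List (Fin 2)) : Prop := ∀ r : ℕ, w ≤ w.rotate r

/-- Colexicographic strict order on equal-length strings:
compare by the largest index of disagreement. -/
def ColexLt (a b : List (Fin 2)) : Prop := a.reverse < b.reverse

open List

namespace List

variable {α : Type*}

theorem append_lt_append_iff_of_length_eq [LT α] {a b x y : List α} (h : a.length = b.length) :
    a ++ x < b ++ y ↔ a < b ∨ a = b ∧ x < y := by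
  induction a generalizing b with
  | nil =>
    obtain rfl : b = [] := length_eq_zero_iff.1 h.symm
    simp
  | cons c a ih =>
    obtain ⟨d, b, rfl⟩ := exists_cons_of_length_eq_add_one h.symm
    simp only [cons_append, cons_lt_cons_iff, ih (Nat.succ_inj.1 h), cons.injEq]
    tauto

theorem replicate_append_cons_lt_replicate_append_cons [LT α] {a b : α} (hab : a < b)
    {k m : ℕ} (hkm : k < m) (x y : List α) :
    replicate m a ++ b :: x < replicate k a ++ b :: y := by
  induction k generalizing m with
  | zero =>
    obtain ⟨m, rfl⟩ := Nat.exists_eq_add_of_lt hkm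
    exact Lex.rel hab
  | succ k ih =>
    obtain ⟨m, rfl⟩ : ∃ m', m = m' + 1 := Nat.exists_eq_add_one.2 (by omega)
    exact Lex.cons (ih (by omega))

theorem mem_drop_of_getLast?_eq_some {l : List α} {a : α} {r : ℕ} (h : l.getLast? = some a)
    (hr : r < l.length) : a ∈ l.drop r :=
  mem_of_getLast? (by rw [getLast?_drop, if_neg (by omega), h])

end List

def leadingZeros (w : List (Fin 2)) : ℕ := (w.takeWhile (· == 0)).length

@[simp]
theorem leadingZeros_cons_zero (w : List (Fin 2)) :
    leadingZeros (0 :: w) = leadingZeros w + 1 := by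
  simp [leadingZeros]

@[simp]
theorem leadingZeros_cons_one (w : List (Fin 2)) : leadingZeros (1 :: w) = 0 := by
  simp [leadingZeros]

@[simp]
theorem leadingZeros_replicate_append (k : ℕ) (w : List (Fin 2)) :
    leadingZeros (replicate k 0 ++ w) = k + leadingZeros w := by
  induction k with
  | zero => simp
  | succ k ih => rw [replicate_succ, cons_append, leadingZeros_cons_zero, ih]; omega

theorem exists_eq_replicate_leadingZeros_append_cons {w : List (Fin 2)} (h : 1 ∈ w) :
    ∃ x, w = replicate (leadingZeros w) 0 ++ 1 :: x := by
  induction w with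
  | nil => simp at h
  | cons a w ih =>
    match a, h with
    | 0, h =>
      obtain ⟨x, hx⟩ := ih (by simpa using h)
      exact ⟨x, by rw [leadingZeros_cons_zero, replicate_succ, cons_append, ← hx]⟩
    | 1, _ => exact ⟨w, by simp⟩

theorem leadingZeros_append_of_one_mem {u : List (Fin 2)} (h : 1 ∈ u) (v : List (Fin 2)) :
    leadingZeros (u ++ v) = leadingZeros u := by
  obtain ⟨x, hx⟩ := exists_eq_replicate_leadingZeros_append_cons h
  rw [hx]
  simp

theorem lt_of_leadingZeros_lt {u v : List (Fin 2)} (hu : 1 ∈ u) (hv : 1 ∈ v)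
    (h : leadingZeros v < leadingZeros u) : u < v := by
  obtain ⟨x, hx⟩ := exists_eq_replicate_leadingZeros_append_cons hu
  obtain ⟨y, hy⟩ := exists_eq_replicate_leadingZeros_append_cons hv
  rw [hx, hy]
  exact replicate_append_cons_lt_replicate_append_cons (by decide) h x y

theorem IsNecklace.leadingZeros_drop_le {w : List (Fin 2)} (hw : IsNecklace w) {r : ℕ}
    (h : 1 ∈ w.drop r) : leadingZeros (w.drop r) ≤ leadingZeros w := by
  by_contra! hlt
  have hr : r ≤ w.length := by
    by_contra!
    simp [drop_eq_nil_of_le this.le] at h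
  have hrot : w.rotate r < w := by
    apply lt_of_leadingZeros_lt
    · rw [rotate_eq_drop_append_take hr]
      exact mem_append_left _ h
    · exact mem_of_mem_drop h
    · rwa [rotate_eq_drop_append_take hr, leadingZeros_append_of_one_mem h]
  exact (hw r).not_gt hrot

theorem IsNecklace.getLast?_eq_one {w : List (Fin 2)} (hw : IsNecklace w) (h : 1 ∈ w) :
    w.getLast? = some 1 := by
  obtain rfl | ⟨v, a, rfl⟩ := eq_nil_or_concat w
  · simp at h
  rw [concat_eq_append] at hw h ⊢
  match a with
  | 1 => simp
  | 0 =>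
    have hv : 1 ∈ v := by simpa using h
    have hrot : (v ++ [0]).rotate v.length < v ++ [0] := by
      rw [rotate_append_length_eq]
      apply lt_of_leadingZeros_lt (by simp [hv]) h
      simp [leadingZeros_append_of_one_mem hv]
    exact absurd (hw v.length) hrot.not_ge

theorem isNecklace_of_leadingZeros_drop_lt {w : List (Fin 2)} (hlast : w.getLast? = some 1)
    (h : ∀ r, 0 < r → r < w.length → leadingZeros (w.drop r) < leadingZeros w) :
    IsNecklace w := by
  intro r
  have hpos : 0 < w.length := length_pos_iff.2 (getLast?_isSome.1 (by simp [hlast]))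
  rw [← rotate_mod]
  set r' := r % w.length
  have hr' : r' < w.length := Nat.mod_lt _ hpos
  rcases Nat.eq_zero_or_pos r' with h0 | hr'pos
  · rw [h0, rotate_zero]
  · have hmem : 1 ∈ w.drop r' := mem_drop_of_getLast?_eq_some hlast hr'
    refine le_of_lt (lt_of_leadingZeros_lt (mem_of_getLast? hlast) ?_ ?_)
    · rw [rotate_eq_drop_append_take hr'.le]
      exact mem_append_left _ hmem
    · rw [rotate_eq_drop_append_take hr'.le, leadingZeros_append_of_one_mem hmem]
      exact h r' hr'pos hr'

theorem IsNecklace.replicate_succ_append {k : ℕ} {w : List (Fin 2)}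
    (hτ : IsNecklace (replicate k 0 ++ 1 :: w)) (hw : w ≠ []) :
    IsNecklace (replicate (k + 1) 0 ++ w) := by
  have hτlast := hτ.getLast?_eq_one (by simp)
  rw [← singleton_append, ← append_assoc, getLast?_append_of_ne_nil _ hw] at hτlast
  refine isNecklace_of_leadingZeros_drop_lt (by rwa [getLast?_append_of_ne_nil _ hw]) ?_
  intro r hr hrlen
  rcases le_or_gt r (k + 1) with hrk | hkr
  · rw [drop_append_of_le_length (by simpa using hrk), drop_replicate]
    simp only [leadingZeros_replicate_append]
    omega
  · obtain ⟨i, rfl⟩ : ∃ i, r = k + 1 + i := ⟨r - (k + 1), by omega⟩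
    have hτdrop : (replicate k 0 ++ 1 :: w).drop (k + 1 + i) = w.drop i := by
      convert drop_length_add_append (l₁ := replicate k (0 : Fin 2) ++ [1]) (l₂ := w) i
        using 2 <;> simp
    have hγdrop : (replicate (k + 1) 0 ++ w).drop (k + 1 + i) = w.drop i := by
      convert drop_length_add_append (l₁ := replicate (k + 1) (0 : Fin 2)) (l₂ := w) i using 2
      simp
    have hbound := hτ.leadingZeros_drop_le (r := k + 1 + i)
      (hτdrop ▸ mem_drop_of_getLast?_eq_some hτlast (by simp at hrlen; omega))
    rw [hτdrop, leadingZeros_replicate_append, leadingZeros_cons_one] at hbound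
    rw [hγdrop, leadingZeros_replicate_append]
    omega

theorem colexLt_append_iff {a b x y : List (Fin 2)} (h : a.length = b.length) :
    ColexLt (x ++ a) (y ++ b) ↔ ColexLt a b ∨ a = b ∧ ColexLt x y := by
  simp only [ColexLt, reverse_append]
  rw [append_lt_append_iff_of_length_eq (by simpa using h), reverse_inj]

theorem colexLt_replicate_succ_zero (k : ℕ) :
    ColexLt (replicate (k + 1) 0) (replicate k 0 ++ [1]) := by
  rw [ColexLt, reverse_append, reverse_replicate, reverse_replicate, reverse_singleton,
    singleton_append, replicate_succ]
  exact Lex.rel (show (0 : Fin 2) < 1 by decide)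

theorem eq_replicate_append_cons_drop {w : List (Fin 2)} {k : ℕ} (hk : k < w.length)
    (hzero : ∀ i < k, w[i]? = some 0) (hk1 : w[k]? ≠ some 0) :
    w = replicate k 0 ++ 1 :: w.drop (k + 1) := by
  induction k generalizing w with
  | zero =>
    obtain ⟨a, w, rfl⟩ := exists_cons_of_length_pos hk
    match a, hk1 with
    | 1, _ => rfl
  | succ k ih =>
    obtain ⟨a, w, rfl⟩ := exists_cons_of_length_pos (Nat.zero_lt_of_lt hk)
    obtain rfl : a = 0 := by simpa using hzero 0 (Nat.succ_pos k)
    rw [replicate_succ, cons_append, drop_succ_cons,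
      ← ih (by simpa using hk) (fun i hi => hzero (i + 1) (by omega)) hk1]

theorem stmt_0_general (n : ℕ) (σ τ : List (Fin 2))
    (hσlen : σ.length = n) (hτlen : τ.length = n)
    (hτ : IsNecklace τ)
    (hlt : ColexLt σ τ)
    (hadj : ∀ γ : List (Fin 2), γ.length = n → IsNecklace γ →
      ¬ (ColexLt σ γ ∧ ColexLt γ τ))
    (j : ℕ) (hj1 : 1 ≤ j) (hjn : j ≤ n)
    (hjne : τ[j - 1]? ≠ some 0)
    (hjmin : ∀ i, 1 ≤ i → i < j → τ[i - 1]? = some 0) :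
    σ.drop j = τ.drop j := by
  obtain ⟨k, rfl⟩ : ∃ k, j = k + 1 := ⟨j - 1, by omega⟩
  rcases hjn.eq_or_lt with rfl | hjlt
  · rw [drop_eq_nil_of_le hσlen.le, drop_eq_nil_of_le hτlen.le]
  set w := τ.drop (k + 1)
  have hτw : τ = replicate k 0 ++ 1 :: w :=
    eq_replicate_append_cons_drop (by omega) (fun i hi => hjmin (i + 1) (by omega) (by omega)) hjne
  have hγ : IsNecklace (replicate (k + 1) 0 ++ w) :=
    (hτw ▸ hτ).replicate_succ_append (by simp [w]; omega)
  have hwlen : (σ.drop (k + 1)).length = w.length := by simp [w, hσlen, hτlen]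
  rw [← take_append_drop (k + 1) σ] at hlt hadj
  rw [hτw, ← singleton_append, ← append_assoc] at hlt hadj
  rcases (colexLt_append_iff hwlen).1 hlt with hsuffix | ⟨heq, -⟩
  · have hσγ := (colexLt_append_iff (x := σ.take (k + 1)) (y := replicate (k + 1) 0) hwlen).2
      (.inl hsuffix)
    have hγτ := (colexLt_append_iff (a := w) rfl).2 (.inr ⟨rfl, colexLt_replicate_succ_zero k⟩)
    exact absurd ⟨hσγ, hγτ⟩ (hadj _ (by simp [w, hτlen]; omega) hγ)
  · exact heq

theorem stmt_0 (n : ℕ) (σ τ : List (Fin 2))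
    (hσlen : σ.length = n) (hτlen : τ.length = n)
    (hσ : IsNecklace σ) (hτ : IsNecklace τ)
    (hlt : ColexLt σ τ)
    (hadj : ∀ γ : List (Fin 2), γ.length = n → IsNecklace γ →
      ¬ (ColexLt σ γ ∧ ColexLt γ τ))
    (j : ℕ) (hj1 : 1 ≤ j) (hjn : j ≤ n)
    (hjne : τ[j - 1]? ≠ some 0)
    (hjmin : ∀ i, 1 ≤ i → i < j → τ[i - 1]? = some 0) :
    σ.drop j = τ.drop j :=
  stmt_0_general n σ τ hσlen hτlen hτ hlt hadj j hj1 hjn hjne hjmin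
end

section
/- Let S_1,...,S_m be pairwise disjoint nonempty subsets of Σ_k^n with universal cycles α_1,...,α_m, let x be the first symbol of α_1, and let U = α_1α_2⋯α_m. Suppose (1) |α_1| ≥ n; (2) among all α_i, the cycle α_1 has a maximal-length prefix of consecutive x's; (3) for each 1 ≤ i < m, the pair (ext_n(α_i), ext_n(α_{i+1})) is suffix-related with respect to (x,n). Then U, viewed cyclically, is a universal cycle for S = S_1 ∪ ⋯ ∪ S_m, and the length-n suffix of U equals the length-n suffix of ext_n(α_m). -/
/-- ext_n(w) = w^t for the smallest t with t·|w| ≥ n. -/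
def ext {A : Type*} (n : ℕ) (w : List A) : List A :=
  (List.replicate ((n + w.length - 1) / w.length) w).flatten

/-- w is a universal cycle for S ⊆ Σ^n: it has length |S| and contains each
string of S exactly once as a cyclic substring of length n. -/
def IsUC {A : Type*} [DecidableEq A] (n : ℕ) (S : Finset (List A)) (w : List A) : Prop :=
  0 < w.length ∧ w.length = S.card ∧
    ∀ s ∈ S, ∃! i : ℕ, i < w.length ∧ (ext n (w.rotate i)).take n = s

/-- (σ, τ) is suffix-related with respect to (x, n): letting j be the smallest
(1-based) index of τ with t_j ≠ x, we have j ≤ n and the length-(n-j) suffixes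
of σ and τ coincide. -/
def SuffixRelated {A : Type*} (σ τ : List A) (x : A) (n : ℕ) : Prop :=
  ∃ j : ℕ, 1 ≤ j ∧ j ≤ n ∧
    τ[j - 1]? ≠ some x ∧
    (∀ i, 1 ≤ i → i < j → τ[i - 1]? = some x) ∧
    σ.drop (σ.length - (n - j)) = τ.drop (τ.length - (n - j))

/-!
Read every word `w` as the bi-infinite periodic word `⋯ w w w ⋯` (`List.cyclicGet`). Cyclic
windows, the periodic extension `ext n w` and the suffixes compared in `SuffixRelated` are then
all finite stretches of these periodic words. If `rᵢ` is the length of the leading run of `x` in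
`αᵢ`, the suffix relation between `α_{i-1}` and `αᵢ` says that their periodic words agree on the
`n - rᵢ - 1` positions before `0`. Since `rᵢ < |αᵢ|` and `|α₀| ≥ n`, induction on `b` shows that
the `n` symbols of `U` (read cyclically) before the start of block `b` are the last `n` symbols of
the periodic word of `α_{b-1}`; for `b = m` this is the claim about the suffix of `U`.

A window of `αⱼ` can be shifted by a multiple of `|αⱼ|` so that it ends inside the first period.
If it then reaches past the leading `x`-run of `αⱼ`, it occurs in `U` across the start of `αⱼ`;
otherwise its part inside the period is a run of `x`, and it occurs across the start of the next
block whose leading run is long enough, or of `α₀`, whose run is maximal. Hence every string of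
`S` occurs in `U`, and since `|U| = |S|` each occurs exactly once.
-/

namespace List

variable {A : Type*}

theorem getElem?_flatten_replicate (w : List A) {c i : ℕ}
    (h : i < c * w.length) : (replicate c w).flatten[i]? = w[i % w.length]? := by
  induction c generalizing i with
  | zero => simp at h
  | succ c ih =>
    rw [replicate_succ, flatten_cons]
    by_cases hi : i < w.length
    · rw [getElem?_append_left hi, Nat.mod_eq_of_lt hi]
    · push Not at hi
      rw [getElem?_append_right hi, ih (by rw [Nat.succ_mul] at h; omega),
        ← Nat.mod_eq_sub_mod hi]

theorem length_takeWhile_eq {p : A → Bool} {l : List A} {i : ℕ}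
    (hi : i < l.length) (hp : ∀ k (hk : k < i), p l[k]) (hn : ¬ p l[i]) :
    (l.takeWhile p).length = i := by
  rw [takeWhile_eq_take_findIdx_not, length_take,
    (findIdx_eq hi).2 ⟨by simpa using hn, fun k hk => by simpa using hp k hk⟩]
  omega

variable [Inhabited A]

def cyclicGet (w : List A) (i : ℤ) : A := w[(i % w.length).toNat]!

def cyclicWindow (n : ℕ) (w : List A) (p : ℤ) : List A :=
  ofFn fun i : Fin n => w.cyclicGet (p + i)

theorem cyclicGet_add_mul_length (w : List A) (i c : ℤ) :
    w.cyclicGet (i + c * w.length) = w.cyclicGet i := by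
  simp only [cyclicGet, Int.add_mul_emod_self_right]

theorem cyclicGet_add_length (w : List A) (i : ℤ) :
    w.cyclicGet (i + w.length) = w.cyclicGet i := by
  simpa using w.cyclicGet_add_mul_length i 1

theorem cyclicGet_natCast (w : List A) (i : ℕ) : w.cyclicGet i = w[i % w.length]! := by
  simp only [cyclicGet, ← Int.natCast_mod, Int.toNat_natCast]

theorem cyclicGet_natCast_mod (w : List A) (i : ℕ) :
    w.cyclicGet (i % w.length : ℕ) = w.cyclicGet i := by
  simp only [cyclicGet_natCast, Nat.mod_mod]

theorem cyclicGet_natCast_of_lt {w : List A} {i : ℕ} (h : i < w.length) :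
    w.cyclicGet i = w[i] := by
  rw [cyclicGet_natCast, Nat.mod_eq_of_lt h, getElem!_pos]

theorem cyclicGet_natCast_of_getElem?_eq {w : List A} {i : ℕ} {a : A} (h : w[i]? = some a) :
    w.cyclicGet i = a := by
  obtain ⟨hi, rfl⟩ := getElem?_eq_some_iff.1 h
  exact cyclicGet_natCast_of_lt hi

theorem cyclicGet_rotate (w : List A) (p i : ℕ) :
    (w.rotate p).cyclicGet i = w.cyclicGet (p + i : ℕ) := by
  rcases Nat.eq_zero_or_pos w.length with hw | hw
  · simp [length_eq_zero_iff.mp hw, cyclicGet]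
  rw [cyclicGet_natCast, cyclicGet_natCast, length_rotate,
    getElem!_pos _ _ (by simpa using Nat.mod_lt i hw), getElem_rotate,
    getElem!_pos w _ (Nat.mod_lt _ hw)]
  congr 1
  rw [Nat.mod_add_mod, Nat.add_comm]

theorem cyclicGet_flatten_replicate (w : List A) {c : ℕ} (hc : 0 < c) (i : ℤ) :
    (replicate c w).flatten.cyclicGet i = w.cyclicGet i := by
  rcases Nat.eq_zero_or_pos w.length with hw | hw
  · simp [length_eq_zero_iff.mp hw, cyclicGet]
  have hlen : ((replicate c w).flatten.length : ℤ) = c * w.length := by simp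
  have hpos : (0 : ℤ) < c * w.length := by positivity
  have hi := Int.emod_nonneg i hpos.ne'
  simp only [cyclicGet, getElem!_eq_getElem?_getD, hlen]
  rw [getElem?_flatten_replicate w (i := (i % (c * w.length : ℤ)).toNat)]
  · congr 2
    zify [hi, Int.emod_nonneg i (by positivity : (w.length : ℤ) ≠ 0)]
    rw [Int.toNat_of_nonneg hi, Int.emod_emod_of_dvd _ (dvd_mul_left _ _),
      Int.toNat_of_nonneg (Int.emod_nonneg _ (by positivity))]
  · zify [hi]
    rw [Int.toNat_of_nonneg hi]
    exact_mod_cast Int.emod_lt_of_pos i hpos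

theorem cyclicWindow_eq_cyclicWindow_iff {n : ℕ} {v w : List A} {p q : ℤ} :
    v.cyclicWindow n p = w.cyclicWindow n q ↔
      ∀ i < n, v.cyclicGet (p + i) = w.cyclicGet (q + i) := by
  simp only [cyclicWindow, ofFn_inj, funext_iff, Fin.forall_iff]

theorem cyclicWindow_add_mul_length (n : ℕ) (w : List A) (p c : ℤ) :
    w.cyclicWindow n (p + c * w.length) = w.cyclicWindow n p :=
  cyclicWindow_eq_cyclicWindow_iff.2 fun i _ => by
    rw [add_right_comm, cyclicGet_add_mul_length]

theorem cyclicWindow_emod (n : ℕ) (w : List A) (p : ℤ) :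
    w.cyclicWindow n (p % w.length) = w.cyclicWindow n p := by
  rw [Int.emod_def, sub_eq_add_neg, neg_mul_eq_mul_neg, mul_comm, cyclicWindow_add_mul_length]

theorem exists_shift_cyclicWindow_eq (n : ℕ) {w : List A} (hw : 0 < w.length) (q : ℤ) :
    ∃ s : ℤ, -n < s ∧ s + n ≤ w.length ∧ w.cyclicWindow n s = w.cyclicWindow n q := by
  have hL : (0 : ℤ) < w.length := by exact_mod_cast hw
  refine ⟨(q + n - 1) % w.length - n + 1, ?_, ?_, ?_⟩
  · linarith [Int.emod_nonneg (q + n - 1) hL.ne']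
  · linarith [Int.emod_lt_of_pos (q + n - 1) hL]
  · rw [Int.emod_def, show q + n - 1 - w.length * ((q + n - 1) / w.length) - n + 1
      = q + -((q + n - 1) / w.length) * w.length by ring, cyclicWindow_add_mul_length]

theorem drop_length_sub_eq_cyclicWindow (w : List A) {k : ℕ} (hk : k ≤ w.length) :
    w.drop (w.length - k) = w.cyclicWindow k (-k) := by
  refine ext_getElem (by simp [cyclicWindow]; omega) fun i h _ => ?_
  simp only [cyclicWindow, List.getElem_ofFn]
  rw [getElem_drop, ← cyclicGet_natCast_of_lt, ← cyclicGet_add_length w (-k + i)]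
  congr 1
  push_cast [hk]
  ring

end List

open List

section Ext

variable {A : Type*}

theorem length_ext {A : Type*} (n : ℕ) (w : List A) :
    (ext n w).length = (n + w.length - 1) / w.length * w.length := by
  simp [ext]

theorem le_length_ext {A : Type*} (n : ℕ) {w : List A} (hw : 0 < w.length) :
    n ≤ (ext n w).length := by
  rw [length_ext]
  have := Nat.div_add_mod (n + w.length - 1) w.length
  have := Nat.mod_lt (n + w.length - 1) hw
  have := Nat.mul_comm w.length ((n + w.length - 1) / w.length)
  omega

theorem existsUnique_lt_of_card_le {β : Type*} [DecidableEq β] {S : Finset β} {N : ℕ}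
    {f : ℕ → β} (hcard : N ≤ S.card) (h : ∀ s ∈ S, ∃ p < N, f p = s) :
    ∀ s ∈ S, ∃! p, p < N ∧ f p = s := by
  have hsub : S ⊆ (Finset.range N).image f := fun s hs => by
    obtain ⟨p, hp, rfl⟩ := h s hs
    exact Finset.mem_image_of_mem f (Finset.mem_range.2 hp)
  have hinj : Set.InjOn f (Finset.range N) := by
    rw [← Finset.card_image_iff]
    have := Finset.card_le_card hsub
    have := (Finset.range N).card_image_le (f := f)
    rw [Finset.card_range] at *
    omega
  intro s hs
  obtain ⟨p, hp, rfl⟩ := h s hs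
  exact ⟨p, ⟨hp, rfl⟩, fun q ⟨hq, hfq⟩ =>
    hinj (by simpa using hq) (by simpa using hp) hfq⟩

variable [Inhabited A]

theorem cyclicGet_ext {n : ℕ} (hn : 0 < n) {w : List A} (hw : 0 < w.length) (i : ℤ) :
    (ext n w).cyclicGet i = w.cyclicGet i :=
  cyclicGet_flatten_replicate w (Nat.div_pos (by omega) hw) i

theorem cyclicWindow_ext {n k : ℕ} (hk : k ≤ n) {w : List A} (hw : 0 < w.length) (p : ℤ) :
    (ext n w).cyclicWindow k p = w.cyclicWindow k p :=
  cyclicWindow_eq_cyclicWindow_iff.2 fun _ hi => cyclicGet_ext (by omega) hw _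

theorem take_ext_rotate (n : ℕ) {w : List A} (hw : 0 < w.length) (p : ℕ) :
    (ext n (w.rotate p)).take n = w.cyclicWindow n p := by
  have hlen : n ≤ (ext n (w.rotate p)).length := le_length_ext n (by simpa using hw)
  refine ext_getElem (by simp [cyclicWindow]; omega) fun i h _ => ?_
  simp only [cyclicWindow, List.getElem_ofFn]
  rw [getElem_take, ← cyclicGet_natCast_of_lt,
    cyclicGet_ext (by simp at h; omega) (by simpa using hw), cyclicGet_rotate]
  push_cast
  rfl

theorem drop_ext_eq_cyclicWindow {n k : ℕ} (hk : k ≤ n) {w : List A} (hw : 0 < w.length) :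
    (ext n w).drop ((ext n w).length - k) = w.cyclicWindow k (-k) := by
  rw [drop_length_sub_eq_cyclicWindow _ (hk.trans (le_length_ext n hw)), cyclicWindow_ext hk hw]

theorem IsUC.exists_cyclicWindow_eq [DecidableEq A] {n : ℕ} {S : Finset (List A)}
    {w : List A} (h : IsUC n S w) {s : List A} (hs : s ∈ S) :
    ∃ q : ℤ, w.cyclicWindow n q = s := by
  obtain ⟨q, ⟨-, hq⟩, -⟩ := h.2.2 s hs
  exact ⟨q, by rw [← take_ext_rotate n h.1, hq]⟩

theorem isUC_of_forall_exists_cyclicWindow_eq [DecidableEq A] {n : ℕ} {S : Finset (List A)}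
    {w : List A} (hw : 0 < w.length) (hcard : w.length = S.card)
    (h : ∀ s ∈ S, ∃ p : ℤ, w.cyclicWindow n p = s) : IsUC n S w := by
  refine ⟨hw, hcard, existsUnique_lt_of_card_le hcard.le fun s hs => ?_⟩
  obtain ⟨p, rfl⟩ := h s hs
  have hL : (0 : ℤ) < w.length := by exact_mod_cast hw
  refine ⟨(p % w.length).toNat, by have := Int.emod_lt_of_pos p hL; omega, ?_⟩
  rw [take_ext_rotate n hw, Int.toNat_of_nonneg (Int.emod_nonneg p hL.ne'), cyclicWindow_emod]

end Ext

section Concat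

variable {A : Type*} (α : ℕ → List A)

def offset (i : ℕ) : ℕ := ((range i).map α).flatten.length

theorem offset_zero : offset α 0 = 0 := rfl

theorem offset_succ (i : ℕ) : offset α (i + 1) = offset α i + (α i).length := by
  simp [offset, range_succ]

theorem offset_mono : Monotone (offset α) :=
  monotone_nat_of_le_succ fun i => by rw [offset_succ]; omega

theorem offset_eq_sum (i : ℕ) : offset α i = ∑ t ∈ Finset.range i, (α t).length := by
  induction i with
  | zero => rfl
  | succ i ih => rw [offset_succ, Finset.sum_range_succ, ih]

theorem flatten_map_range_eq_append {m i : ℕ} (hi : i < m) :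
    ((range m).map α).flatten =
      ((range i).map α).flatten ++ α i ++
        ((range (m - (i + 1))).map (α ∘ (i + 1 + ·))).flatten := by
  conv_lhs => rw [show m = i + 1 + (m - (i + 1)) by omega, range_add, range_succ]
  simp

theorem getElem?_flatten_map_range_offset_add {m i t : ℕ} (hi : i < m) (ht : t < (α i).length) :
    ((range m).map α).flatten[offset α i + t]? = (α i)[t]? := by
  rw [flatten_map_range_eq_append α hi, append_assoc, getElem?_append_right (by simp [offset]),
    offset, Nat.add_sub_cancel_left, getElem?_append_left ht]

variable [Inhabited A]

theorem cyclicGet_flatten_offset_add {m i : ℕ} (hi : i < m) {t : ℤ} (ht : 0 ≤ t)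
    (htL : t < (α i).length) :
    ((range m).map α).flatten.cyclicGet (offset α i + t) = (α i).cyclicGet t := by
  lift t to ℕ using ht
  have htL : t < (α i).length := by exact_mod_cast htL
  rw [cyclicGet_natCast_of_lt htL]
  exact_mod_cast cyclicGet_natCast_of_getElem?_eq
    ((getElem?_flatten_map_range_offset_add α hi htL).trans (getElem?_eq_getElem htL))

theorem cyclicGet_flatten_offset_add_mod {m b : ℕ} (hm : 0 < m) (hb : b ≤ m) {t : ℤ}
    (ht : 0 ≤ t) (htL : t < (α (b % m)).length) :
    ((range m).map α).flatten.cyclicGet (offset α b + t) = (α (b % m)).cyclicGet t := by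
  rcases hb.lt_or_eq with hb | rfl
  · rw [Nat.mod_eq_of_lt hb] at htL ⊢
    exact cyclicGet_flatten_offset_add α hb ht htL
  · rw [Nat.mod_self] at htL ⊢
    have := cyclicGet_flatten_offset_add α hm ht htL
    rwa [offset_zero, Nat.cast_zero, zero_add, ← cyclicGet_add_length, add_comm] at this

end Concat

section Runs

variable {A : Type*} [DecidableEq A]

def leadingRun (x : A) (w : List A) : ℕ := (w.takeWhile (· = x)).length

theorem leadingRun_le_length (x : A) (w : List A) : leadingRun x w ≤ w.length :=
  (takeWhile_prefix _).length_le

variable [Inhabited A]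

theorem cyclicGet_of_lt_leadingRun {x : A} {w : List A} {t : ℕ} (ht : t < leadingRun x w) :
    w.cyclicGet t = x := by
  have hpre := takeWhile_prefix (fun a => decide (a = x)) (l := w)
  rw [cyclicGet_natCast_of_lt (lt_of_lt_of_le ht (leadingRun_le_length x w)),
    ← hpre.getElem ht]
  simpa using mem_takeWhile_imp (getElem_mem ht)

theorem leadingRun_eq_of_cyclicGet {x : A} {w : List A} (hw : 0 < w.length) {i : ℕ}
    (hx : ∀ t < i, w.cyclicGet t = x) (hi : w.cyclicGet i ≠ x) :
    i < w.length ∧ leadingRun x w = i := by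
  have hiL : i < w.length := by
    by_contra! hLi
    exact hi (by
      rw [← cyclicGet_natCast_mod]
      exact hx _ (lt_of_lt_of_le (Nat.mod_lt i hw) hLi))
  refine ⟨hiL, length_takeWhile_eq hiL (fun k hk => ?_) ?_⟩
  · simpa [← cyclicGet_natCast_of_lt] using hx k hk
  · simpa [← cyclicGet_natCast_of_lt hiL] using hi

end Runs

section TailEq

variable {A : Type*} [Inhabited A]

/-- The periodic extensions of `v` and `w` end in the same `K` symbols. -/
def TailEq (K : ℤ) (v w : List A) : Prop :=
  ∀ t : ℤ, -K ≤ t → t < 0 → v.cyclicGet t = w.cyclicGet t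

theorem TailEq.refl (K : ℤ) (w : List A) : TailEq K w w := fun _ _ _ => rfl

theorem TailEq.symm {K : ℤ} {v w : List A} (h : TailEq K v w) : TailEq K w v :=
  fun t ht ht0 => (h t ht ht0).symm

theorem TailEq.trans {K : ℤ} {u v w : List A} (h₁ : TailEq K u v) (h₂ : TailEq K v w) :
    TailEq K u w :=
  fun t ht ht0 => (h₁ t ht ht0).trans (h₂ t ht ht0)

theorem TailEq.mono {K K' : ℤ} {v w : List A} (h : TailEq K v w) (hK : K' ≤ K) :
    TailEq K' v w :=
  fun t ht ht0 => h t (by omega) ht0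

/-- The first non-`x` symbol of `ext n τ` is the one right after the leading run of `τ`. -/
theorem SuffixRelated.leadingRun_lt_and_tailEq [DecidableEq A] {x : A} {n : ℕ} {σ τ : List A}
    (hσ : 0 < σ.length) (hτ : 0 < τ.length) (h : SuffixRelated (ext n σ) (ext n τ) x n) :
    leadingRun x τ < τ.length ∧ TailEq (n - leadingRun x τ - 1) σ τ := by
  obtain ⟨j, hj1, hjn, hne, hxs, hdrop⟩ := h
  have hget : ∀ i < n, (ext n τ)[i]? = some (τ.cyclicGet i) := fun i hi => by
    rw [getElem?_eq_getElem (by have := le_length_ext n hτ; omega), ← cyclicGet_natCast_of_lt,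
      cyclicGet_ext (by omega) hτ]
  obtain ⟨hlt, hrun⟩ := leadingRun_eq_of_cyclicGet hτ (i := j - 1)
    (fun t ht => by simpa [hget t (by omega)] using hxs (t + 1) (by omega) (by omega))
    (fun heq => hne (by rw [hget _ (by omega), heq]))
  refine ⟨hrun ▸ hlt, fun t ht ht0 => ?_⟩
  rw [drop_ext_eq_cyclicWindow (by omega) hσ, drop_ext_eq_cyclicWindow (by omega) hτ,
    cyclicWindow_eq_cyclicWindow_iff] at hdrop
  have := hdrop (t + (n - j : ℕ)).toNat (by omega)
  rwa [Int.toNat_of_nonneg (by omega), neg_add_cancel_comm_assoc] at this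

end TailEq

section Concatenation

variable {A : Type*} [Inhabited A] [DecidableEq A]

/-- The hypotheses of the concatenation theorem, with the suffix relation between consecutive
cycles unfolded into `TailEq`. -/
structure LinkedCycles (x : A) (n m : ℕ) (α : ℕ → List A) : Prop where
  length_pos : ∀ i < m, 0 < (α i).length
  le_length_zero : n ≤ (α 0).length
  leadingRun_le : ∀ i < m, leadingRun x (α i) ≤ leadingRun x (α 0)
  leadingRun_lt : ∀ i, 0 < i → i < m → leadingRun x (α i) < (α i).length
  tailEq : ∀ i, 0 < i → i < m → TailEq (n - leadingRun x (α i) - 1) (α (i - 1)) (α i)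

namespace LinkedCycles

variable {x : A} {n m : ℕ} {α : ℕ → List A}

theorem cyclicGet_flatten_offset_add_of_neg (h : LinkedCycles x n m α) {b : ℕ} (hb : 0 < b)
    (hbm : b ≤ m) {t : ℤ} (ht : -n ≤ t) (ht0 : t < 0) :
    ((range m).map α).flatten.cyclicGet (offset α b + t) = (α (b - 1)).cyclicGet t := by
  induction b, hb using Nat.le_induction generalizing t with
  | base =>
    have hL := h.le_length_zero
    rw [offset_succ, offset_zero, Nat.zero_add, ← (α 0).cyclicGet_add_length t, add_comm t,
      ← cyclicGet_flatten_offset_add α hbm (by omega) (by omega)]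
    simp [offset_zero]
  | succ b hb ih =>
    have hrun := h.leadingRun_lt b hb (by omega)
    rw [offset_succ, Nat.cast_add, add_assoc, Nat.add_sub_cancel,
      ← (α b).cyclicGet_add_length t, add_comm t]
    by_cases hpos : 0 ≤ (α b).length + t
    · exact cyclicGet_flatten_offset_add α (by omega) hpos (by omega)
    · rw [ih (by omega) (by omega) (by omega)]
      exact h.tailEq b hb (by omega) _ (by omega) (by omega)

theorem tailEq_of_forall_le (h : LinkedCycles x n m α) {K : ℤ} {j l : ℕ} (hjl : j ≤ l)
    (hl : l < m) (hK : ∀ i, j < i → i ≤ l → K ≤ n - leadingRun x (α i) - 1) :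
    TailEq K (α j) (α l) := by
  induction l, hjl using Nat.le_induction with
  | base => exact TailEq.refl K _
  | succ l hjl ih =>
    exact (ih (by omega) fun i hi hil => hK i hi (by omega)).trans
      ((h.tailEq (l + 1) (by omega) hl).mono (hK _ (by omega) le_rfl))

theorem cyclicWindow_flatten_offset_add (h : LinkedCycles x n m α) {b : ℕ} (hb : 0 < b)
    (hbm : b ≤ m) {w : List A} {s : ℤ} (hs : -n ≤ s) (hsn : s + n ≤ (α (b % m)).length)
    (htail : TailEq (-s) (α (b - 1)) w)
    (hhead : ∀ t, 0 ≤ t → t < s + n → (α (b % m)).cyclicGet t = w.cyclicGet t) :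
    ((range m).map α).flatten.cyclicWindow n (offset α b + s) = w.cyclicWindow n s := by
  refine cyclicWindow_eq_cyclicWindow_iff.2 fun i hi => ?_
  rw [add_assoc]
  by_cases hneg : s + i < 0
  · rw [h.cyclicGet_flatten_offset_add_of_neg hb hbm (by omega) hneg]
    exact htail _ (by omega) hneg
  · rw [cyclicGet_flatten_offset_add_mod α (by omega) hbm (by omega) (by omega)]
    exact hhead _ (by omega) (by omega)

theorem exists_tailEq_of_leadingRun_le (h : LinkedCycles x n m α) {j : ℕ} (hj : j < m)
    {s : ℤ} (hrun : leadingRun x (α j) ≤ s + n - 1) :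
    ∃ b, 0 < b ∧ b ≤ m ∧ b % m = j ∧ TailEq (-s) (α (b - 1)) (α j) := by
  rcases Nat.eq_zero_or_pos j with rfl | hj0
  · refine ⟨m, hj, le_rfl, Nat.mod_self m,
      (h.tailEq_of_forall_le (Nat.zero_le _) (by omega) fun i _ hi => ?_).symm⟩
    have := h.leadingRun_le i (by omega)
    omega
  · exact ⟨j, hj0, hj.le, Nat.mod_eq_of_lt hj, (h.tailEq j hj0 hj).mono (by omega)⟩

theorem exists_tailEq_of_lt_leadingRun (h : LinkedCycles x n m α) {j : ℕ} (hj : j < m)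
    {s : ℤ} (hrun : s + n - 1 < leadingRun x (α j)) :
    ∃ b, 0 < b ∧ b ≤ m ∧ s + n - 1 < leadingRun x (α (b % m)) ∧
      TailEq (-s) (α (b - 1)) (α j) := by
  classical
  have hex : ∃ b, j < b ∧ b ≤ m ∧ (b = m ∨ s + n - 1 < leadingRun x (α b)) :=
    ⟨m, hj, le_rfl, Or.inl rfl⟩
  obtain ⟨hjb, hbm, hb⟩ := Nat.find_spec hex
  refine ⟨Nat.find hex, by omega, hbm, ?_, ?_⟩
  · rcases hbm.lt_or_eq with hbm | hbm
    · rw [Nat.mod_eq_of_lt hbm]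
      exact hb.resolve_left hbm.ne
    · rw [hbm, Nat.mod_self]
      have := h.leadingRun_le j hj
      omega
  · refine (h.tailEq_of_forall_le (by omega) (by omega) fun i hi hib => ?_).symm
    have := Nat.find_min hex (show i < Nat.find hex by omega)
    push Not at this
    have := (this hi (by omega)).2
    omega

theorem exists_cyclicWindow_flatten_eq (h : LinkedCycles x n m α) {j : ℕ} (hj : j < m)
    (q : ℤ) :
    ∃ p : ℤ, ((range m).map α).flatten.cyclicWindow n p = (α j).cyclicWindow n q := by
  obtain ⟨s, hs, hsn, hq⟩ := exists_shift_cyclicWindow_eq n (h.length_pos j hj) q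
  rw [← hq]
  by_cases hrun : leadingRun x (α j) ≤ s + n - 1
  · obtain ⟨b, hb, hbm, rfl, htail⟩ := h.exists_tailEq_of_leadingRun_le hj hrun
    exact ⟨_, h.cyclicWindow_flatten_offset_add hb hbm (by omega) hsn htail fun _ _ _ => rfl⟩
  · -- the part of the window inside the first period is a run of `x`
    obtain ⟨b, hb, hbm, hrunb, htail⟩ := h.exists_tailEq_of_lt_leadingRun hj (not_le.1 hrun)
    refine ⟨_, h.cyclicWindow_flatten_offset_add hb hbm (by omega) ?_ htail fun t ht0 ht => ?_⟩
    · have := leadingRun_le_length x (α (b % m))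
      omega
    · lift t to ℕ using ht0
      rw [cyclicGet_of_lt_leadingRun (x := x) (by omega),
        cyclicGet_of_lt_leadingRun (x := x) (by omega)]

end LinkedCycles

end Concatenation

theorem stmt_9_general (k n m : ℕ) (hm : 1 ≤ m)
    (S : ℕ → Finset (List (Fin k))) (α : ℕ → List (Fin k))
    (hdisj : ∀ i < m, ∀ j < m, i ≠ j → Disjoint (S i) (S j))
    (huc : ∀ i < m, IsUC n (S i) (α i))
    (x : Fin k)
    (h1 : n ≤ (α 0).length)
    (h2 : ∀ i < m, ((α i).takeWhile (· = x)).length ≤ ((α 0).takeWhile (· = x)).length)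
    (h3 : ∀ i, i + 1 < m → SuffixRelated (ext n (α i)) (ext n (α (i + 1))) x n) :
    IsUC n ((Finset.range m).biUnion S) (((List.range m).map α).flatten) ∧
      (((List.range m).map α).flatten).drop ((((List.range m).map α).flatten).length - n) =
        (ext n (α (m - 1))).drop ((ext n (α (m - 1))).length - n) := by
  have : Inhabited (Fin k) := ⟨x⟩
  have hpos : ∀ i < m, 0 < (α i).length := fun i hi => (huc i hi).1
  have hlink : ∀ i, 0 < i → i < m → leadingRun x (α i) < (α i).length ∧
      TailEq (n - leadingRun x (α i) - 1) (α (i - 1)) (α i) := fun i hi0 him => by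
    have := h3 (i - 1) (by omega)
    rw [Nat.sub_add_cancel hi0] at this
    exact this.leadingRun_lt_and_tailEq (hpos _ (by omega)) (hpos i him)
  have h : LinkedCycles x n m α :=
    ⟨hpos, h1, h2, fun i hi0 him => (hlink i hi0 him).1, fun i hi0 him => (hlink i hi0 him).2⟩
  have hlen : (((List.range m).map α).flatten).length = offset α m := rfl
  have hL0 : (α 0).length ≤ offset α m := by
    simpa [offset_succ, offset_zero] using offset_mono α hm
  refine ⟨isUC_of_forall_exists_cyclicWindow_eq ((hpos 0 hm).trans_le hL0) ?_
    fun s hs => ?_, ?_⟩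
  · rw [hlen, offset_eq_sum, Finset.card_biUnion fun i hi j hj hij =>
      hdisj i (Finset.mem_range.1 hi) j (Finset.mem_range.1 hj) hij]
    exact Finset.sum_congr rfl fun i hi => (huc i (Finset.mem_range.1 hi)).2.1
  · obtain ⟨j, hj, hsj⟩ := Finset.mem_biUnion.1 hs
    obtain ⟨q, rfl⟩ := (huc j (Finset.mem_range.1 hj)).exists_cyclicWindow_eq hsj
    exact h.exists_cyclicWindow_flatten_eq (Finset.mem_range.1 hj) q
  · rw [drop_length_sub_eq_cyclicWindow _ (h1.trans hL0),
      drop_ext_eq_cyclicWindow le_rfl (hpos _ (by omega)), ← cyclicWindow_add_mul_length _ _ _ 1,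
      one_mul, add_comm]
    exact h.cyclicWindow_flatten_offset_add hm le_rfl le_rfl (by simp)
      (TailEq.refl _ _) fun t _ _ => by omega

theorem stmt_9 (k n m : ℕ) (hm : 1 ≤ m)
    (S : ℕ → Finset (List (Fin k))) (α : ℕ → List (Fin k))
    (hsub : ∀ i < m, ∀ s ∈ S i, s.length = n)
    (hne : ∀ i < m, (S i).Nonempty)
    (hdisj : ∀ i < m, ∀ j < m, i ≠ j → Disjoint (S i) (S j))
    (huc : ∀ i < m, IsUC n (S i) (α i))
    (x : Fin k) (hx : (α 0)[0]? = some x)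
    (h1 : n ≤ (α 0).length)
    (h2 : ∀ i < m, ((α i).takeWhile (· = x)).length ≤ ((α 0).takeWhile (· = x)).length)
    (h3 : ∀ i, i + 1 < m → SuffixRelated (ext n (α i)) (ext n (α (i + 1))) x n) :
    IsUC n ((Finset.range m).biUnion S) (((List.range m).map α).flatten) ∧
      (((List.range m).map α).flatten).drop ((((List.range m).map α).flatten).length - n) =
        (ext n (α (m - 1))).drop ((ext n (α (m - 1))).length - n) :=
  stmt_9_general k n m hm S α hdisj huc x h1 h2 h3
end
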